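/- arXiv:1905.03390 — 3 statements merged into one kernel-verified Lean document; each statement's English description precedes it below -/
import Mathlib

section
/- Let V and L be finite nonempty index sets, and let Ψ : V × L → ℝ satisfy, for all (i,k) ∈ V × L: ∑_{j ≠ i} A_{ij}^k (Ψ_{jk} − Ψ_{ik}) + m_i σa_i Ψ_{ik} + b_{ik} Ψ_{ik} = m_i σs_i (Ψ̄_i − Ψ_{ik}) + m_i q_{ik} + b_{ik} α_{ik}, where A_{ij}^k ≤ 0 for all i,j,k, m_i > 0, σs_i ≥ 0, b_{ik} ≥ 0, and Ψ̄_i = (1/|S|) ∑_{l∈L} μ_l Ψ_{il} with μ_l > 0 and ∑_l μ_l = |S|. Assume m_i σa_i + b_{ik} > 0 for all (i,k). If (i₀,k₀) attains the global minimum of Ψ, then Ψ^min ≥ (m_{i₀} q_{i₀k₀} + b_{i₀k₀} α_{i₀k₀})/(m_{i₀} σa_{i₀} + b_{i₀k₀}). -/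
theorem discrete_minimum_principle {V L : Type*} [Fintype V] [Fintype L]
    [DecidableEq V] [Nonempty V] [Nonempty L]
    (A : V → V → L → ℝ) (m σa σs : V → ℝ) (b α q : V → L → ℝ)
    (μ : L → ℝ) (S : ℝ) (Ψ : V → L → ℝ) (Ψbar : V → ℝ)
    (hA : ∀ i j k, A i j k ≤ 0)
    (hm : ∀ i, 0 < m i) (hσs : ∀ i, 0 ≤ σs i) (hb : ∀ i k, 0 ≤ b i k)
    (hμ : ∀ l, 0 < μ l) (hS : ∑ l, μ l = S)
    (hbar : ∀ i, Ψbar i = (1 / S) * ∑ l, μ l * Ψ i l)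
    (heq : ∀ i k, ∑ j ∈ Finset.univ.erase i, A i j k * (Ψ j k - Ψ i k)
        + m i * σa i * Ψ i k + b i k * Ψ i k
        = m i * σs i * (Ψbar i - Ψ i k) + m i * q i k + b i k * α i k)
    (hpos : ∀ i k, 0 < m i * σa i + b i k)
    (i₀ : V) (k₀ : L) (hmin : ∀ j l, Ψ i₀ k₀ ≤ Ψ j l) :
    (m i₀ * q i₀ k₀ + b i₀ k₀ * α i₀ k₀) / (m i₀ * σa i₀ + b i₀ k₀) ≤ Ψ i₀ k₀ := by
  have hSpos : 0 < S := by
    rw [← hS]; exact Finset.sum_pos (fun l _ => hμ l) Finset.univ_nonempty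
  have hsum : ∑ j ∈ Finset.univ.erase i₀, A i₀ j k₀ * (Ψ j k₀ - Ψ i₀ k₀) ≤ 0 := by
    apply Finset.sum_nonpos
    intro j _
    exact mul_nonpos_of_nonpos_of_nonneg (hA i₀ j k₀) (by linarith [hmin j k₀])
  have hbarge : Ψ i₀ k₀ ≤ Ψbar i₀ := by
    rw [hbar i₀]
    rw [div_mul_eq_mul_div, one_mul, le_div_iff₀ hSpos, ← hS, Finset.mul_sum]
    apply Finset.sum_le_sum
    intro l _
    rw [mul_comm (Ψ i₀ k₀) (μ l)]
    exact mul_le_mul_of_nonneg_left (hmin i₀ l) (hμ l).le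
  have h := heq i₀ k₀
  have hscat : 0 ≤ m i₀ * σs i₀ * (Ψbar i₀ - Ψ i₀ k₀) :=
    mul_nonneg (mul_nonneg (hm i₀).le (hσs i₀)) (by linarith)
  rw [div_le_iff₀ (hpos i₀ k₀)]
  nlinarith [hpos i₀ k₀]
end

section
/- Under the same setting as the discrete minimum principle (all A_{ij}^k ≤ 0, m_i > 0, σs_i ≥ 0, b_{ik} ≥ 0, weighted average Ψ̄_i with positive weights summing to |S|), if m_i σa_i + b_{ik} > 0 for all (i,k) and (i₁,k₁) attains the global maximum of Ψ, then Ψ^max ≤ (m_{i₁} q_{i₁k₁} + b_{i₁k₁} α_{i₁k₁})/(m_{i₁} σa_{i₁} + b_{i₁k₁}). -/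
theorem discrete_maximum_principle {V L : Type*} [Fintype V] [Fintype L]
    [DecidableEq V] [Nonempty V] [Nonempty L]
    (A : V → V → L → ℝ) (m σa σs : V → ℝ) (b α q : V → L → ℝ)
    (μ : L → ℝ) (S : ℝ) (Ψ : V → L → ℝ) (Ψbar : V → ℝ)
    (hA : ∀ i j k, A i j k ≤ 0)
    (hm : ∀ i, 0 < m i) (hσs : ∀ i, 0 ≤ σs i) (hb : ∀ i k, 0 ≤ b i k)
    (hμ : ∀ l, 0 < μ l) (hS : ∑ l, μ l = S)
    (hbar : ∀ i, Ψbar i = (1 / S) * ∑ l, μ l * Ψ i l)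
    (heq : ∀ i k, ∑ j ∈ Finset.univ.erase i, A i j k * (Ψ j k - Ψ i k)
        + m i * σa i * Ψ i k + b i k * Ψ i k
        = m i * σs i * (Ψbar i - Ψ i k) + m i * q i k + b i k * α i k)
    (hpos : ∀ i k, 0 < m i * σa i + b i k)
    (i₁ : V) (k₁ : L) (hmax : ∀ j l, Ψ j l ≤ Ψ i₁ k₁) :
    Ψ i₁ k₁ ≤ (m i₁ * q i₁ k₁ + b i₁ k₁ * α i₁ k₁) / (m i₁ * σa i₁ + b i₁ k₁) := by
  have hSpos : 0 < S := by
    rw [← hS]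
    exact Finset.sum_pos (fun l _ => hμ l) Finset.univ_nonempty
  have hbarle : Ψbar i₁ ≤ Ψ i₁ k₁ := by
    rw [hbar]
    rw [div_mul_eq_mul_div, one_mul, div_le_iff₀ hSpos, ← hS, Finset.mul_sum]
    exact Finset.sum_le_sum (fun l _ => by
      have := hmax i₁ l
      nlinarith [hμ l])
  have hsum : 0 ≤ ∑ j ∈ Finset.univ.erase i₁, A i₁ j k₁ * (Ψ j k₁ - Ψ i₁ k₁) := by
    apply Finset.sum_nonneg
    intro j _
    have h1 := hA i₁ j k₁
    have h2 := hmax j k₁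
    nlinarith
  have h := heq i₁ k₁
  have hkey : (m i₁ * σa i₁ + b i₁ k₁) * Ψ i₁ k₁ ≤ m i₁ * q i₁ k₁ + b i₁ k₁ * α i₁ k₁ := by
    nlinarith [hm i₁, hσs i₁, mul_nonneg (mul_nonneg (hm i₁).le (hσs i₁)) (sub_nonneg.2 hbarle)]
  rw [le_div_iff₀ (hpos i₁ k₁)]
  linarith
end

section
/- Let V, L be finite sets, A_{ij}^k ≤ 0, m_i > 0, σs_i ≥ 0, σs_{ij} ≥ 0, h_{ij} > 0, h_i > 0, σa_i ≥ 0, b_{ik} ≥ 0, and suppose Ψ : V × L → ℝ satisfies, for all (i,k): ∑_{j≠i} (A_{ij}^k/(σs_{ij} h_{ij} + 1)) (Ψ_{jk} − Ψ_{ik}) + m_i σa_i Ψ_{ik} = m_i q_{ik} + (m_i σs_i/(σs_i h_i + 1))(Ψ̄_i − Ψ_{ik}) + (b_{ik}/(σs_i h_i + 1))(β_{ik} − Ψ_{ik}), where Ψ̄_i = (1/|S|)∑_l μ_l Ψ_{il} with μ_l > 0, ∑_l μ_l = |S|. If m_i σa_i + b_{ik}/(σs_i h_i + 1) > 0 for all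 (i,k), then at a global minimizer (i₀,k₀): Ψ^min ≥ (m_{i₀} q_{i₀k₀} + (b_{i₀k₀}/(σs_{i₀}h_{i₀}+1)) β_{i₀k₀}) / (m_{i₀} σa_{i₀} + b_{i₀k₀}/(σs_{i₀}h_{i₀}+1)). -/
theorem AP_minimum_principle {V L : Type*} [Fintype V] [Fintype L]
    [DecidableEq V] [Nonempty V] [Nonempty L]
    (A : V → V → L → ℝ) (m σa σs h : V → ℝ) (σsij hij : V → V → ℝ)
    (b β q : V → L → ℝ) (μ : L → ℝ) (S : ℝ) (Ψ : V → L → ℝ) (Ψbar : V → ℝ)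
    (hA : ∀ i j k, A i j k ≤ 0)
    (hm : ∀ i, 0 < m i) (hσs : ∀ i, 0 ≤ σs i) (hσa : ∀ i, 0 ≤ σa i)
    (hσsij : ∀ i j, 0 ≤ σsij i j) (hhij : ∀ i j, 0 < hij i j) (hh : ∀ i, 0 < h i)
    (hb : ∀ i k, 0 ≤ b i k)
    (hμ : ∀ l, 0 < μ l) (hS : ∑ l, μ l = S)
    (hbar : ∀ i, Ψbar i = (1 / S) * ∑ l, μ l * Ψ i l)
    (heq : ∀ i k,
      ∑ j ∈ Finset.univ.erase i, (A i j k / (σsij i j * hij i j + 1)) * (Ψ j k - Ψ i k)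
        + m i * σa i * Ψ i k
      = m i * q i k + (m i * σs i / (σs i * h i + 1)) * (Ψbar i - Ψ i k)
        + (b i k / (σs i * h i + 1)) * (β i k - Ψ i k))
    (hpos : ∀ i k, 0 < m i * σa i + b i k / (σs i * h i + 1))
    (i₀ : V) (k₀ : L) (hmin : ∀ j l, Ψ i₀ k₀ ≤ Ψ j l) :
    (m i₀ * q i₀ k₀ + (b i₀ k₀ / (σs i₀ * h i₀ + 1)) * β i₀ k₀)
      / (m i₀ * σa i₀ + b i₀ k₀ / (σs i₀ * h i₀ + 1)) ≤ Ψ i₀ k₀ := by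
  have hSpos : 0 < S := hS ▸ Finset.sum_pos (fun l _ => hμ l) Finset.univ_nonempty
  have hden : 0 < σs i₀ * h i₀ + 1 := by nlinarith [mul_nonneg (hσs i₀) (hh i₀).le]
  -- sum term nonpositive
  have hsum : ∑ j ∈ Finset.univ.erase i₀,
      (A i₀ j k₀ / (σsij i₀ j * hij i₀ j + 1)) * (Ψ j k₀ - Ψ i₀ k₀) ≤ 0 := by
    apply Finset.sum_nonpos
    intro j _
    apply mul_nonpos_of_nonpos_of_nonneg
    · exact div_nonpos_of_nonpos_of_nonneg (hA i₀ j k₀)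
        (by nlinarith [mul_nonneg (hσsij i₀ j) (hhij i₀ j).le])
    · linarith [hmin j k₀]
  -- Ψbar ≥ Ψmin
  have hbarge : Ψ i₀ k₀ ≤ Ψbar i₀ := by
    rw [hbar i₀]
    rw [div_mul_eq_mul_div, one_mul, le_div_iff₀ hSpos, ← hS, Finset.mul_sum]
    apply Finset.sum_le_sum
    intro l _
    rw [mul_comm (Ψ i₀ k₀) (μ l)]
    exact mul_le_mul_of_nonneg_left (hmin i₀ l) (le_of_lt (hμ l))
  have h1 : 0 ≤ (m i₀ * σs i₀ / (σs i₀ * h i₀ + 1)) * (Ψbar i₀ - Ψ i₀ k₀) := by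
    apply mul_nonneg
    · exact div_nonneg (mul_nonneg (hm i₀).le (hσs i₀)) hden.le
    · linarith
  have hE := heq i₀ k₀
  have hb0 : 0 ≤ b i₀ k₀ / (σs i₀ * h i₀ + 1) := div_nonneg (hb i₀ k₀) hden.le
  rw [div_le_iff₀ (hpos i₀ k₀)]
  nlinarith [hsum, h1, hb0]
end
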